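/- Assume the Bregman PDMM setup (see context) at a fixed iteration t, with the mirror-averaging optimality conditions at steps t and t+1, the primal optimality condition at step t+1, the dual update, and parameters satisfying 0 < γ < μσ and τ ≤ ρ(μσ − γ). Let (x*, ν*) be a KKT point: x* ∈ 𝒳, ν* = (ν*_1, …, ν*_m), and for each i there exists g*_i with ⟨g*_i, x* − v⟩ ≥ 0 for all v ∈ 𝒳 and f_i(v) ≥ f_i(x*) + ⟨−ν*_i + Σ_j P_{ij} ν*_j − g*_i, v − x*⟩ for all v ∈ ℝ^n. Define the Lyapunov function V(s) = (1/(2τρ)) Σ_i ‖ν*_i − ν_i^s‖_2² + Σ_i B_φ(x*, y_i^s) + Σ_i (δ_i/ρ) B_{φ_i}(x*, x_i^s) and the residual R(t+1) = (γ/2) Σ_i ‖x_i^{t+1} − Σ_j P_{ij} x_j^{t+1}‖_2² + Σ_i B_φ(x_i^{t+1}, y_i^t) + Σ_i (δ_i/ρ) B_{φ_i}(x_i^{t+1}, x_i^t). Then V(t) − V(t+1) ≥ R(t+1). -/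

import Mathlib

open scoped RealInnerProductSpace BigOperators

/-- The Bregman divergence `B_φ(u,v) = φ(u) − φ(v) − ⟨∇φ(v), u − v⟩`. -/
noncomputable def breg {n : ℕ} (φ : EuclideanSpace ℝ (Fin n) → ℝ)
    (u v : EuclideanSpace ℝ (Fin n)) : ℝ :=
  φ u - φ v - ⟪gradient φ v, u - v⟫

/-- The ℓ_p norm on ℝ^n: `‖w‖_p = (Σ_k |w_k|^p)^(1/p)`. -/
noncomputable def lpnorm {n : ℕ} (p : ℝ) (w : EuclideanSpace ℝ (Fin n)) : ℝ :=
  (∑ k, |w k| ^ p) ^ (1 / p)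

/-!
Write `r = (I - P) x^{t+1}`. Expanding the dual update, the dual part of `V` decreases by
`(1/ρ) Σ ⟪ν*_i - ν_i^t, r_i⟫ - (τ/2ρ) Σ ‖r_i‖²`. The primal optimality and KKT conditions give
constrained subgradients of the same convex `f_i` at `x_i^{t+1}` and at `x*`; their monotonicity,
the symmetry of `P` and the three-point identity for Bregman divergences bound this pairing from
below by `Σ B_φ(x*, x_i^{t+1}) - Σ B_φ(x*, y_i^t)` plus the Bregman terms of `R(t+1)`.
The mirror-averaging step at `t+1` bridges the gap from `x^{t+1}` to `y^{t+1}`: `φ` is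
`μσ`-strongly convex in the Euclidean norm (as `‖·‖_p² ≥ σ ‖·‖₂²`), and `0 ≤ P ≤ I` gives
`Σ_i ‖((I - P) X)_i‖² ≤ Σ_{ij} P_ij ‖Y_i - X_j‖²`, so
`Σ B_φ(x*, x_i^{t+1}) - Σ B_φ(x*, y_i^{t+1}) ≥ (μσ/2) Σ ‖r_i‖²`. Finally `τ ≤ ρ(μσ - γ)` absorbs
the loss `(τ/2ρ) Σ ‖r_i‖²`.
-/

open Finset Matrix

lemma sum_rpow_le_rpow_sum {ι : Type*} (s : Finset ι) {a : ι → ℝ} (ha : ∀ i, 0 ≤ a i) {q : ℝ}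
    (hq : 1 ≤ q) : ∑ i ∈ s, a i ^ q ≤ (∑ i ∈ s, a i) ^ q := by
  induction s using Finset.cons_induction with
  | empty => simp [Real.zero_rpow (by linarith : q ≠ 0)]
  | cons i s _ ih =>
    rw [sum_cons, sum_cons]
    exact (add_le_add_right ih _).trans
      (Real.add_rpow_le_rpow_add (ha i) (sum_nonneg fun j _ => ha j) hq)

section LpNorm

variable {n : ℕ} {p : ℝ}

lemma lpnorm_sq (hp : 0 < p) (w : EuclideanSpace ℝ (Fin n)) :
    lpnorm p w ^ 2 = (∑ k, |w k| ^ p) ^ (2 / p) := by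
  rw [lpnorm, ← Real.rpow_natCast, ← Real.rpow_mul (sum_nonneg fun k _ => by positivity)]
  congr 1
  field_simp
  norm_num

lemma norm_sq_le_lpnorm_sq_of_le_two (hp : 0 < p) (hp2 : p ≤ 2) (w : EuclideanSpace ℝ (Fin n)) :
    ‖w‖ ^ 2 ≤ lpnorm p w ^ 2 := by
  have hpow : ∀ k, w k ^ 2 = (|w k| ^ p) ^ (2 / p) := fun k => by
    rw [← Real.rpow_mul (abs_nonneg _), mul_div_cancel₀ _ hp.ne', ← sq_abs]
    norm_cast
  rw [EuclideanSpace.real_norm_sq_eq, lpnorm_sq hp]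
  simp only [hpow]
  exact sum_rpow_le_rpow_sum _ (fun k => by positivity) ((one_le_div hp).2 hp2)

lemma rpow_mul_norm_sq_le_lpnorm_sq (hp2 : 2 ≤ p) (w : EuclideanSpace ℝ (Fin n)) :
    (n : ℝ) ^ (2 / p - 1) * ‖w‖ ^ 2 ≤ lpnorm p w ^ 2 := by
  have hp : 0 < p := by linarith
  rcases Nat.eq_zero_or_pos n with rfl | hn
  · simp [Subsingleton.elim w 0, sq_nonneg]
  have hq : 1 ≤ p / 2 := by linarith
  have hpow : ∀ k, (w k ^ 2) ^ (p / 2) = |w k| ^ p := fun k => by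
    rw [← sq_abs, ← Real.rpow_natCast, ← Real.rpow_mul (abs_nonneg _)]
    norm_num
    ring_nf
  have hmean := Real.rpow_sum_le_const_mul_sum_rpow_of_nonneg (s := univ)
    (f := fun k => w k ^ 2) hq (fun k _ => sq_nonneg _)
  simp only [card_univ, Fintype.card_fin, hpow] at hmean
  have hn0 : (0 : ℝ) < n := Nat.cast_pos.2 hn
  have h := (Real.le_rpow_inv_iff_of_pos (sum_nonneg fun k _ => sq_nonneg _)
    (by positivity) (by positivity : (0 : ℝ) < p / 2)).2 hmean
  have hexp : (p / 2 - 1) * (p / 2)⁻¹ = -(2 / p - 1) := by field_simp; ring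
  rw [Real.mul_rpow (by positivity) (sum_nonneg fun k _ => by positivity),
    ← Real.rpow_mul hn0.le, hexp, Real.rpow_neg hn0.le, inv_div] at h
  rw [EuclideanSpace.real_norm_sq_eq, lpnorm_sq hp]
  calc (n : ℝ) ^ (2 / p - 1) * ∑ k, w k ^ 2
      ≤ (n : ℝ) ^ (2 / p - 1) * (((n : ℝ) ^ (2 / p - 1))⁻¹ * (∑ k, |w k| ^ p) ^ (2 / p)) := by
        gcongr
    _ = (∑ k, |w k| ^ p) ^ (2 / p) := by field_simp

lemma min_mul_norm_sq_le_lpnorm_sq (hp : 0 < p) (w : EuclideanSpace ℝ (Fin n)) :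
    min 1 ((n : ℝ) ^ (2 / p - 1)) * ‖w‖ ^ 2 ≤ lpnorm p w ^ 2 := by
  rcases le_total p 2 with hp2 | hp2
  · exact (mul_le_of_le_one_left (by positivity) (min_le_left _ _)).trans
      (norm_sq_le_lpnorm_sq_of_le_two hp hp2 w)
  · exact (mul_le_mul_of_nonneg_right (min_le_right _ _) (by positivity)).trans
      (rpow_mul_norm_sq_le_lpnorm_sq hp2 w)

lemma min_mul_norm_sq_le_breg {𝒳 : Set (EuclideanSpace ℝ (Fin n))}
    {φ : EuclideanSpace ℝ (Fin n) → ℝ} {μ : ℝ} (hμ : 0 ≤ μ) (hp : 0 < p)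
    (hstrong : ∀ u ∈ 𝒳, ∀ v ∈ 𝒳, μ / 2 * lpnorm p (u - v) ^ 2 ≤ breg φ u v) :
    ∀ u ∈ 𝒳, ∀ v ∈ 𝒳, μ * min 1 ((n : ℝ) ^ (2 / p - 1)) / 2 * ‖u - v‖ ^ 2 ≤ breg φ u v :=
  fun u hu v hv =>
    calc μ * min 1 ((n : ℝ) ^ (2 / p - 1)) / 2 * ‖u - v‖ ^ 2
        = μ / 2 * (min 1 ((n : ℝ) ^ (2 / p - 1)) * ‖u - v‖ ^ 2) := by ring
      _ ≤ μ / 2 * lpnorm p (u - v) ^ 2 := by gcongr; exact min_mul_norm_sq_le_lpnorm_sq hp _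
      _ ≤ breg φ u v := hstrong u hu v hv

end LpNorm

section DoublyStochastic

variable {ι κ E : Type*} [Fintype ι] [Fintype κ]
  [NormedAddCommGroup E] [InnerProductSpace ℝ E]

lemma sum_norm_sub_sq_eq_of_sum_eq_one {w : ι → ℝ} (hw : ∑ j, w j = 1) (y : E) (x : ι → E) :
    ∑ j, w j * ‖y - x j‖ ^ 2
      = ‖y - ∑ j, w j • x j‖ ^ 2 - ‖∑ j, w j • x j‖ ^ 2 + ∑ j, w j * ‖x j‖ ^ 2 := by
  simp only [norm_sub_sq_real, mul_add, mul_sub, sum_add_distrib, sum_sub_distrib, ← sum_mul, hw,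
    inner_sum, real_inner_smul_right, mul_sum]
  simp only [mul_left_comm (w _) (2 : ℝ)]
  ring

lemma sum_norm_sum_smul_sq (B : Matrix κ ι ℝ) (X : ι → E) :
    ∑ k, ‖∑ i, B k i • X i‖ ^ 2 = ∑ i, ∑ j, (Bᵀ * B) i j * ⟪X i, X j⟫ := by
  simp only [← real_inner_self_eq_norm_sq, sum_inner, inner_sum, real_inner_smul_left,
    real_inner_smul_right, mul_apply, transpose_apply, sum_mul]
  rw [sum_comm]
  refine sum_congr rfl fun i _ => ?_
  rw [sum_comm]
  refine sum_congr rfl fun j _ => sum_congr rfl fun k _ => by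
    rw [real_inner_comm]; ring

lemma Matrix.PosSemidef.sum_mul_inner_nonneg {M : Matrix ι ι ℝ} (hM : M.PosSemidef) (X : ι → E) :
    0 ≤ ∑ i, ∑ j, M i j * ⟪X i, X j⟫ := by
  obtain ⟨r, v, rfl⟩ := posSemidef_iff_eq_sum_vecMulVec.1 hM
  have hB : ∑ k, vecMulVec (v k) (star (v k)) = (of v)ᵀ * of v := by
    ext i j
    simp [vecMulVec_apply, mul_apply, Matrix.sum_apply]
  rw [hB, ← sum_norm_sum_smul_sq]
  positivity

variable [DecidableEq ι]

lemma sum_sum_smul_of_mem_doublyStochastic {M : Type*} [AddCommMonoid M] [Module ℝ M]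
    {P : Matrix ι ι ℝ} (hP : P ∈ doublyStochastic ℝ ι) (a : ι → M) :
    ∑ i, ∑ j, P i j • a j = ∑ j, a j := by
  rw [sum_comm]
  simp only [← sum_smul, sum_col_of_mem_doublyStochastic hP, one_smul]

variable {P : Matrix ι ι ℝ}

lemma posSemidef_one_sub_of_mem_doublyStochastic (hP : P ∈ doublyStochastic ℝ ι)
    (hPsym : P.IsSymm) : (1 - P).PosSemidef := by
  refine .of_dotProduct_mulVec_nonneg (isHermitian_one.sub (isHermitian_iff_isSymm.2 hPsym))
    fun u => ?_
  have hrow : ∑ i, ∑ j, P i j * u i ^ 2 = ∑ i, u i ^ 2 := by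
    simp only [← sum_mul, sum_row_of_mem_doublyStochastic hP, one_mul]
  have hcol : ∑ i, ∑ j, P i j * u j ^ 2 = ∑ j, u j ^ 2 :=
    sum_sum_smul_of_mem_doublyStochastic hP _
  have hdirichlet : 0 ≤ ∑ i, ∑ j, P i j * (u i - u j) ^ 2 :=
    sum_nonneg fun i _ => sum_nonneg fun j _ => mul_nonneg (hP.1 i j) (sq_nonneg _)
  have hquad : star u ⬝ᵥ ((1 - P) *ᵥ u)
      = (∑ i, ∑ j, P i j * (u i - u j) ^ 2) / 2 := by
    rw [sub_mulVec, one_mulVec, dotProduct_sub, star_trivial]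
    simp only [dotProduct, mulVec, sub_sq, mul_add, mul_sub, sum_add_distrib, sum_sub_distrib, hrow,
      hcol, mul_sum]
    have hcross : ∀ a b, P a b * (2 * u a * u b) = 2 * (u a * (P a b * u b)) := fun a b => by ring
    simp only [hcross, ← mul_sum, ← sq]
    ring
  rw [hquad]
  exact div_nonneg hdirichlet zero_le_two

lemma posSemidef_sub_mul_self_of_mem_doublyStochastic (hP : P ∈ doublyStochastic ℝ ι)
    (hPsym : P.IsSymm) (hPpsd : P.PosSemidef) : (P - P * P).PosSemidef := by
  have hPh : Pᴴ = P := (isHermitian_iff_isSymm.2 hPsym).eq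
  have h := (hPpsd.conjTranspose_mul_mul_same (1 - P)).add
    ((posSemidef_one_sub_of_mem_doublyStochastic hP hPsym).conjTranspose_mul_mul_same P)
  rwa [conjTranspose_sub, conjTranspose_one, hPh, show (1 - P) * P * (1 - P) + P * (1 - P) * P
    = P - P * P by noncomm_ring] at h

lemma sum_norm_sub_sum_smul_sq_le (hP : P ∈ doublyStochastic ℝ ι) (hPsym : P.IsSymm)
    (hPpsd : P.PosSemidef) (X Y : ι → E) :
    ∑ i, ‖X i - ∑ j, P i j • X j‖ ^ 2 ≤ ∑ i, ∑ j, P i j * ‖Y i - X j‖ ^ 2 := by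
  set Z : ι → E := fun i => ∑ j, P i j • X j with hZ
  have hvar : ∑ i, ∑ j, P i j * ‖Y i - X j‖ ^ 2
      = ∑ i, ‖Y i - Z i‖ ^ 2 - ∑ i, ‖Z i‖ ^ 2 + ∑ j, ‖X j‖ ^ 2 := by
    have hcol : ∑ i, ∑ j, P i j * ‖X j‖ ^ 2 = ∑ j, ‖X j‖ ^ 2 :=
      sum_sum_smul_of_mem_doublyStochastic hP _
    simp only [sum_norm_sub_sq_eq_of_sum_eq_one (sum_row_of_mem_doublyStochastic hP _),
      sum_add_distrib, sum_sub_distrib, hcol, hZ]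
  have hpair : ∑ i, ⟪X i, Z i⟫ = ∑ i, ∑ j, P i j * ⟪X i, X j⟫ := by
    simp only [hZ, inner_sum, real_inner_smul_right]
  have hnormZ : ∑ i, ‖Z i‖ ^ 2 = ∑ i, ∑ j, (P * P) i j * ⟪X i, X j⟫ := by
    rw [sum_norm_sum_smul_sq, hPsym.eq]
  have hgap : 0 ≤ ∑ i, ⟪X i, Z i⟫ - ∑ i, ‖Z i‖ ^ 2 := by
    simpa only [hpair, hnormZ, Matrix.sub_apply, sub_mul, sum_sub_distrib] using
      (posSemidef_sub_mul_self_of_mem_doublyStochastic hP hPsym hPpsd).sum_mul_inner_nonneg X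
  have hexpand : ∑ i, ‖X i - Z i‖ ^ 2
      = ∑ i, ‖X i‖ ^ 2 - 2 * ∑ i, ⟪X i, Z i⟫ + ∑ i, ‖Z i‖ ^ 2 := by
    simp only [norm_sub_sq_real, sum_add_distrib, sum_sub_distrib, mul_sum]
  have hYZ : 0 ≤ ∑ i, ‖Y i - Z i‖ ^ 2 := by positivity
  linarith

lemma sum_inner_sub_sum_smul_sub (hP : P ∈ doublyStochastic ℝ ι) (hPsym : P.IsSymm)
    (e x : ι → E) (z : E) :
    ∑ i, ⟪e i - ∑ j, P i j • e j, x i - z⟫ = ∑ i, ⟪e i, x i - ∑ j, P i j • x j⟫ := by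
  have hz : ∑ i, ⟪∑ j, P i j • e j, z⟫ = ∑ i, ⟪e i, z⟫ := by
    rw [← sum_inner, sum_sum_smul_of_mem_doublyStochastic hP, sum_inner]
  have hx : ∑ i, ⟪∑ j, P i j • e j, x i⟫ = ∑ i, ⟪e i, ∑ j, P i j • x j⟫ := by
    simp only [sum_inner, inner_sum, real_inner_smul_left, real_inner_smul_right]
    rw [sum_comm]
    exact sum_congr rfl fun i _ => sum_congr rfl fun j _ => by
      rw [hPsym.apply i j, real_inner_comm]
  simp only [inner_sub_left, inner_sub_right, sum_sub_distrib, hz, hx]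
  ring

end DoublyStochastic

lemma sum_norm_sub_sq_of_eq_add_smul {ι E : Type*} [Fintype ι] [NormedAddCommGroup E]
    [InnerProductSpace ℝ E] {a ν ν' r : ι → E} {τ : ℝ} (hν' : ∀ i, ν' i = ν i + τ • r i) :
    ∑ i, ‖a i - ν' i‖ ^ 2
      = ∑ i, ‖a i - ν i‖ ^ 2 - 2 * τ * ∑ i, ⟪a i - ν i, r i⟫ + τ ^ 2 * ∑ i, ‖r i‖ ^ 2 := by
  simp only [hν', ← sub_sub, norm_sub_sq_real, real_inner_smul_right, norm_smul, mul_pow,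
    Real.norm_eq_abs, sq_abs, sum_add_distrib, sum_sub_distrib, mul_sum]
  ring_nf

lemma inner_sub_nonneg_of_subgradient {E : Type*} [NormedAddCommGroup E] [InnerProductSpace ℝ E]
    {f : E → ℝ} {𝒳 : Set E} {x z a b g G : E} (hx : x ∈ 𝒳) (hz : z ∈ 𝒳)
    (hg : ∀ v ∈ 𝒳, 0 ≤ ⟪g, x - v⟫) (hG : ∀ v ∈ 𝒳, 0 ≤ ⟪G, z - v⟫)
    (hfx : ∀ v, f v ≥ f x + ⟪a - g, v - x⟫) (hfz : ∀ v, f v ≥ f z + ⟪b - G, v - z⟫) :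
    0 ≤ ⟪a - b, x - z⟫ := by
  have h₁ := hfx z
  have h₂ := hfz x
  have h₃ := hg z hz
  have h₄ := hG x hx
  rw [← neg_sub x z, inner_neg_right] at h₁ h₄
  simp only [inner_sub_left] at h₁ h₂ ⊢
  linarith

lemma breg_three_point {n : ℕ} (φ : EuclideanSpace ℝ (Fin n) → ℝ)
    (u v w : EuclideanSpace ℝ (Fin n)) :
    ⟪gradient φ v - gradient φ w, u - v⟫ = breg φ u w - breg φ u v - breg φ v w := by
  simp only [breg, inner_sub_left, inner_sub_right]
  ring

section PDMM

variable {n : ℕ} {𝒳 : Set (EuclideanSpace ℝ (Fin n))} {φ : EuclideanSpace ℝ (Fin n) → ℝ}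

lemma breg_primal_step_le {f ψ : EuclideanSpace ℝ (Fin n) → ℝ} {ρ δ : ℝ}
    {x x' y z a b g G : EuclideanSpace ℝ (Fin n)} (hx : x ∈ 𝒳) (hz : z ∈ 𝒳)
    (hg : ∀ v ∈ 𝒳, 0 ≤ ⟪g, x - v⟫) (hG : ∀ v ∈ 𝒳, 0 ≤ ⟪G, z - v⟫)
    (hfx : ∀ v, f v ≥ f x + ⟪a - ρ • (gradient φ x - gradient φ y)
      - δ • (gradient ψ x - gradient ψ x') - g, v - x⟫)
    (hfz : ∀ v, f v ≥ f z + ⟪b - G, v - z⟫) :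
    ρ * (breg φ z x + breg φ x y - breg φ z y) + δ * (breg ψ z x + breg ψ x x' - breg ψ z x')
      ≤ ⟪a - b, x - z⟫ := by
  have h := inner_sub_nonneg_of_subgradient hx hz hg hG hfx hfz
  have hφ := breg_three_point φ z x y
  have hψ := breg_three_point ψ z x x'
  rw [← neg_sub z x, inner_neg_right] at h
  rw [sub_right_comm, sub_right_comm a, inner_sub_left, inner_sub_left, inner_sub_left,
    real_inner_smul_left, real_inner_smul_left, hφ, hψ] at h
  rw [← neg_sub z x, inner_neg_right, inner_sub_left]
  linarith

lemma breg_add_sum_le_of_mirror {ι : Type*} [Fintype ι] {c : ℝ}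
    (hstrong : ∀ u ∈ 𝒳, ∀ v ∈ 𝒳, c / 2 * ‖u - v‖ ^ 2 ≤ breg φ u v) {w : ι → ℝ}
    (hw : ∀ j, 0 ≤ w j) (hw1 : ∑ j, w j = 1) {x : ι → EuclideanSpace ℝ (Fin n)}
    (hx : ∀ j, x j ∈ 𝒳) {y z : EuclideanSpace ℝ (Fin n)} (hy : y ∈ 𝒳)
    (hmirror : 0 ≤ ∑ j, w j * ⟪gradient φ y - gradient φ (x j), z - y⟫) :
    breg φ z y + c / 2 * ∑ j, w j * ‖y - x j‖ ^ 2 ≤ ∑ j, w j * breg φ z (x j) := by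
  simp only [breg_three_point, mul_sub, sum_sub_distrib, ← sum_mul, hw1, one_mul] at hmirror
  have hdist : c / 2 * ∑ j, w j * ‖y - x j‖ ^ 2 ≤ ∑ j, w j * breg φ y (x j) := by
    rw [mul_sum]
    refine sum_le_sum fun j _ => ?_
    rw [mul_left_comm]
    exact mul_le_mul_of_nonneg_left (hstrong _ hy _ (hx j)) (hw j)
  linarith

lemma mul_sum_norm_sq_le_sum_breg_sub_of_mirror {ι : Type*} [Fintype ι] [DecidableEq ι] {c : ℝ}
    (hc : 0 ≤ c) (hstrong : ∀ u ∈ 𝒳, ∀ v ∈ 𝒳, c / 2 * ‖u - v‖ ^ 2 ≤ breg φ u v)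
    {P : Matrix ι ι ℝ} (hP : P ∈ doublyStochastic ℝ ι) (hPsym : P.IsSymm)
    (hPpsd : P.PosSemidef) {x y : ι → EuclideanSpace ℝ (Fin n)} (hx : ∀ j, x j ∈ 𝒳)
    (hy : ∀ i, y i ∈ 𝒳) {z : EuclideanSpace ℝ (Fin n)}
    (hmirror : ∀ i, 0 ≤ ∑ j, P i j * ⟪gradient φ (y i) - gradient φ (x j), z - y i⟫) :
    c / 2 * ∑ i, ‖x i - ∑ j, P i j • x j‖ ^ 2 ≤ ∑ i, breg φ z (x i) - ∑ i, breg φ z (y i) := by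
  have hsum := sum_le_sum fun i (_ : i ∈ univ) => breg_add_sum_le_of_mirror hstrong (hP.1 i)
    (sum_row_of_mem_doublyStochastic hP i) hx (hy i) (hmirror i)
  have hcol : ∑ i, ∑ j, P i j * breg φ z (x j) = ∑ j, breg φ z (x j) :=
    sum_sum_smul_of_mem_doublyStochastic hP _
  rw [sum_add_distrib, ← mul_sum, hcol] at hsum
  have hspread := mul_le_mul_of_nonneg_left (sum_norm_sub_sum_smul_sq_le hP hPsym hPpsd x y)
    (by positivity : 0 ≤ c / 2)
  linarith

lemma sum_breg_le_sum_inner_div_of_subgradients {ι : Type*} [Fintype ι] [DecidableEq ι]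
    {f ψ : ι → EuclideanSpace ℝ (Fin n) → ℝ} {P : Matrix ι ι ℝ}
    (hP : P ∈ doublyStochastic ℝ ι) (hPsym : P.IsSymm) {ρ : ℝ} (hρ : 0 < ρ) {δ : ι → ℝ}
    {x x' y ν νstar : ι → EuclideanSpace ℝ (Fin n)} {z : EuclideanSpace ℝ (Fin n)}
    (hx : ∀ i, x i ∈ 𝒳) (hz : z ∈ 𝒳)
    (hprimal : ∀ i, ∃ g : EuclideanSpace ℝ (Fin n), (∀ v ∈ 𝒳, 0 ≤ ⟪g, x i - v⟫) ∧
      ∀ v, f i v ≥ f i (x i) + ⟪-ν i + (∑ j, P i j • ν j)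
        - ρ • (gradient φ (x i) - gradient φ (y i))
        - δ i • (gradient (ψ i) (x i) - gradient (ψ i) (x' i)) - g, v - x i⟫)
    (hkkt : ∀ i, ∃ G : EuclideanSpace ℝ (Fin n), (∀ v ∈ 𝒳, 0 ≤ ⟪G, z - v⟫) ∧
      ∀ v, f i v ≥ f i z + ⟪-νstar i + (∑ j, P i j • νstar j) - G, v - z⟫) :
    ∑ i, (breg φ z (x i) + breg φ (x i) (y i) - breg φ z (y i))
      + ∑ i, δ i / ρ * (breg (ψ i) z (x i) + breg (ψ i) (x i) (x' i) - breg (ψ i) z (x' i))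
      ≤ (∑ i, ⟪νstar i - ν i, x i - ∑ j, P i j • x j⟫) / ρ := by
  rw [← sum_add_distrib, ← sum_inner_sub_sum_smul_sub hP hPsym _ _ z, sum_div]
  refine sum_le_sum fun i _ => ?_
  obtain ⟨g, hg, hfg⟩ := hprimal i
  obtain ⟨G, hG, hfG⟩ := hkkt i
  refine (le_div_iff₀ hρ).2 <| (le_of_eq ?_).trans <|
    (breg_primal_step_le (hx i) hz hg hG hfg hfG).trans_eq ?_
  · field_simp
  · congr 1
    simp only [smul_sub, sum_sub_distrib]
    abel

end PDMM

theorem bregman_pdmm_lyapunov_descent_general {n m : ℕ}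
    (𝒳 : Set (EuclideanSpace ℝ (Fin n)))
    (f : Fin m → EuclideanSpace ℝ (Fin n) → ℝ)
    (P : Matrix (Fin m) (Fin m) ℝ) (hPsym : P.IsSymm)
    (hPnn : ∀ i j, 0 ≤ P i j) (hProw : ∀ i, ∑ j, P i j = 1) (hPpsd : P.PosSemidef)
    (φ : EuclideanSpace ℝ (Fin n) → ℝ)
    (φi : Fin m → EuclideanSpace ℝ (Fin n) → ℝ)
    (μ p σ ρ τ γ : ℝ) (δ : Fin m → ℝ)
    (hμ : 0 < μ) (hp : 1 ≤ p)
    (hstrong : ∀ u ∈ 𝒳, ∀ v ∈ 𝒳, μ / 2 * lpnorm p (u - v) ^ 2 ≤ breg φ u v)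
    (hσ : σ = min 1 ((n : ℝ) ^ (2 / p - 1)))
    (hρ : 0 < ρ) (hτ : 0 < τ)
    (hτρ : τ ≤ ρ * (μ * σ - γ))
    (x y ν : ℕ → Fin m → EuclideanSpace ℝ (Fin n))
    (hxX : ∀ t i, x t i ∈ 𝒳) (hyX : ∀ t i, y t i ∈ 𝒳)
    (t : ℕ)
    (hmirror : ∀ s ∈ ({t, t + 1} : Set ℕ), ∀ i, ∀ u ∈ 𝒳,
      0 ≤ ∑ j, P i j * ⟪gradient φ (y s i) - gradient φ (x s j), u - y s i⟫)
    (hprimal : ∀ i, ∃ g : EuclideanSpace ℝ (Fin n),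
      (∀ v ∈ 𝒳, 0 ≤ ⟪g, x (t + 1) i - v⟫) ∧
      ∀ v, f i v ≥ f i (x (t + 1) i) +
        ⟪-ν t i + (∑ j, P i j • ν t j)
            - ρ • (gradient φ (x (t + 1) i) - gradient φ (y t i))
            - δ i • (gradient (φi i) (x (t + 1) i) - gradient (φi i) (x t i))
            - g, v - x (t + 1) i⟫)
    (hdual : ∀ i, ν (t + 1) i =
      ν t i + τ • (x (t + 1) i - ∑ j, P i j • x (t + 1) j))
    (xstar : EuclideanSpace ℝ (Fin n)) (hxstar : xstar ∈ 𝒳)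
    (νstar : Fin m → EuclideanSpace ℝ (Fin n))
    (hkkt : ∀ i, ∃ g : EuclideanSpace ℝ (Fin n),
      (∀ v ∈ 𝒳, 0 ≤ ⟪g, xstar - v⟫) ∧
      ∀ v, f i v ≥ f i xstar +
        ⟪-νstar i + (∑ j, P i j • νstar j) - g, v - xstar⟫)
    (V : ℕ → ℝ)
    (hV : ∀ s, V s =
      1 / (2 * τ * ρ) * ∑ i, ‖νstar i - ν s i‖ ^ 2
        + (∑ i, breg φ xstar (y s i))
        + ∑ i, δ i / ρ * breg (φi i) xstar (x s i))
    (R : ℝ)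
    (hR : R =
      γ / 2 * ∑ i, ‖x (t + 1) i - ∑ j, P i j • x (t + 1) j‖ ^ 2
        + (∑ i, breg φ (x (t + 1) i) (y t i))
        + ∑ i, δ i / ρ * breg (φi i) (x (t + 1) i) (x t i)) :
    V t - V (t + 1) ≥ R := by
  have hP : P ∈ doublyStochastic ℝ (Fin m) := mem_doublyStochastic_iff_sum.2
    ⟨hPnn, hProw, fun j => by simpa only [hPsym.apply] using hProw j⟩
  have hc : 0 ≤ μ * σ := hσ ▸ mul_nonneg hμ.le (le_min zero_le_one (by positivity))
  have hmir := mul_sum_norm_sq_le_sum_breg_sub_of_mirror hc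
    (hσ ▸ min_mul_norm_sq_le_breg hμ.le (by linarith) hstrong) hP hPsym hPpsd (hxX (t + 1))
    (hyX (t + 1)) (hmirror (t + 1) (by simp) · xstar hxstar)
  have hpd := sum_breg_le_sum_inner_div_of_subgradients (x' := x t) hP hPsym hρ (hxX (t + 1))
    hxstar hprimal hkkt
  simp only [mul_add, mul_sub, sum_add_distrib, sum_sub_distrib] at hpd
  set r := fun i => x (t + 1) i - ∑ j, P i j • x (t + 1) j
  have hdual_sum : 1 / (2 * τ * ρ) * ∑ i, ‖νstar i - ν t i‖ ^ 2
      - 1 / (2 * τ * ρ) * ∑ i, ‖νstar i - ν (t + 1) i‖ ^ 2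
      = (∑ i, ⟪νstar i - ν t i, r i⟫) / ρ - τ / (2 * ρ) * ∑ i, ‖r i‖ ^ 2 := by
    rw [sum_norm_sub_sq_of_eq_add_smul hdual]
    field_simp
    ring
  have hstep_size : τ / (2 * ρ) * ∑ i, ‖r i‖ ^ 2 ≤ (μ * σ - γ) / 2 * ∑ i, ‖r i‖ ^ 2 := by
    refine mul_le_mul_of_nonneg_right ?_ (by positivity)
    rw [div_le_iff₀ (by positivity)]
    linarith
  rw [hV, hV, hR]
  linarith

/-- One-step Lyapunov descent of Bregman PDMM: `V(t) − V(t+1) ≥ R(t+1)`. -/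
theorem bregman_pdmm_lyapunov_descent {n m : ℕ}
    (𝒳 : Set (EuclideanSpace ℝ (Fin n)))
    (hXne : 𝒳.Nonempty) (hXclosed : IsClosed 𝒳) (hXconv : Convex ℝ 𝒳)
    (f : Fin m → EuclideanSpace ℝ (Fin n) → ℝ)
    (hf : ∀ i, ConvexOn ℝ Set.univ (f i))
    (P : Matrix (Fin m) (Fin m) ℝ) (hPsym : P.IsSymm)
    (hPnn : ∀ i j, 0 ≤ P i j) (hProw : ∀ i, ∑ j, P i j = 1) (hPpsd : P.PosSemidef)
    (φ : EuclideanSpace ℝ (Fin n) → ℝ)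
    (hφd : Differentiable ℝ φ) (hφc : ConvexOn ℝ Set.univ φ)
    (φi : Fin m → EuclideanSpace ℝ (Fin n) → ℝ)
    (hφid : ∀ i, Differentiable ℝ (φi i)) (hφic : ∀ i, ConvexOn ℝ Set.univ (φi i))
    (μ p σ ρ τ γ : ℝ) (δ : Fin m → ℝ)
    (hμ : 0 < μ) (hp : 1 ≤ p)
    (hstrong : ∀ u ∈ 𝒳, ∀ v ∈ 𝒳, μ / 2 * lpnorm p (u - v) ^ 2 ≤ breg φ u v)
    (hσ : σ = min 1 ((n : ℝ) ^ (2 / p - 1)))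
    (hρ : 0 < ρ) (hτ : 0 < τ) (hδ : ∀ i, 0 ≤ δ i)
    (hγ0 : 0 < γ) (hγ : γ < μ * σ) (hτρ : τ ≤ ρ * (μ * σ - γ))
    (x y ν : ℕ → Fin m → EuclideanSpace ℝ (Fin n))
    (hxX : ∀ t i, x t i ∈ 𝒳) (hyX : ∀ t i, y t i ∈ 𝒳)
    (t : ℕ)
    (hmirror : ∀ s ∈ ({t, t + 1} : Set ℕ), ∀ i, ∀ u ∈ 𝒳,
      0 ≤ ∑ j, P i j * ⟪gradient φ (y s i) - gradient φ (x s j), u - y s i⟫)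
    (hprimal : ∀ i, ∃ g : EuclideanSpace ℝ (Fin n),
      (∀ v ∈ 𝒳, 0 ≤ ⟪g, x (t + 1) i - v⟫) ∧
      ∀ v, f i v ≥ f i (x (t + 1) i) +
        ⟪-ν t i + (∑ j, P i j • ν t j)
            - ρ • (gradient φ (x (t + 1) i) - gradient φ (y t i))
            - δ i • (gradient (φi i) (x (t + 1) i) - gradient (φi i) (x t i))
            - g, v - x (t + 1) i⟫)
    (hdual : ∀ i, ν (t + 1) i =
      ν t i + τ • (x (t + 1) i - ∑ j, P i j • x (t + 1) j))
    (xstar : EuclideanSpace ℝ (Fin n)) (hxstar : xstar ∈ 𝒳)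
    (νstar : Fin m → EuclideanSpace ℝ (Fin n))
    (hkkt : ∀ i, ∃ g : EuclideanSpace ℝ (Fin n),
      (∀ v ∈ 𝒳, 0 ≤ ⟪g, xstar - v⟫) ∧
      ∀ v, f i v ≥ f i xstar +
        ⟪-νstar i + (∑ j, P i j • νstar j) - g, v - xstar⟫)
    (V : ℕ → ℝ)
    (hV : ∀ s, V s =
      1 / (2 * τ * ρ) * ∑ i, ‖νstar i - ν s i‖ ^ 2
        + (∑ i, breg φ xstar (y s i))
        + ∑ i, δ i / ρ * breg (φi i) xstar (x s i))
    (R : ℝ)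
    (hR : R =
      γ / 2 * ∑ i, ‖x (t + 1) i - ∑ j, P i j • x (t + 1) j‖ ^ 2
        + (∑ i, breg φ (x (t + 1) i) (y t i))
        + ∑ i, δ i / ρ * breg (φi i) (x (t + 1) i) (x t i)) :
    V t - V (t + 1) ≥ R :=
  bregman_pdmm_lyapunov_descent_general 𝒳 f P hPsym hPnn hProw hPpsd φ φi μ p σ ρ τ γ δ hμ hp
    hstrong hσ hρ hτ hτρ x y ν hxX hyX t hmirror hprimal hdual xstar hxstar νstar hkkt V hV R hR
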